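/- Let X be an n-correct set and ℓ a line containing at most n nodes of X. If λ′ and λ″ are two maximal lines of X such that λ′ ∩ λ″ ∩ ℓ is a node of X (ℓ-adjoint maximal lines), then X^ℓ = (X \ (λ′ ∪ λ″))^ℓ. -/

import Mathlib

attribute [local instance] Classical.propDecidable

/-- Evaluate a bivariate polynomial at a point of the plane. -/
noncomputable def evalPt (p : MvPolynomial (Fin 2) ℝ) (A : ℝ × ℝ) : ℝ :=
  MvPolynomial.eval ![A.1, A.2] p

/-- A (polynomial defining a) line: a bivariate polynomial of total degree exactly 1. -/
def IsLinearPoly (l : MvPolynomial (Fin 2) ℝ) : Prop := l.totalDegree = 1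

/-- A point lies on the line defined by `l`. -/
def OnLine (l : MvPolynomial (Fin 2) ℝ) (A : ℝ × ℝ) : Prop := evalPt l A = 0

/-- Two degree-1 polynomials define the same line (same zero set). -/
def SameLine (l₁ l₂ : MvPolynomial (Fin 2) ℝ) : Prop := ∀ P, OnLine l₁ P ↔ OnLine l₂ P

/-- `X` is an `n`-correct set of nodes in the plane. -/
def NCorrect (n : ℕ) (X : Finset (ℝ × ℝ)) : Prop :=
  X.card = (n + 2) * (n + 1) / 2 ∧
  ∀ c : (ℝ × ℝ) → ℝ, ∃! p : MvPolynomial (Fin 2) ℝ,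
    p.totalDegree ≤ n ∧ ∀ A ∈ X, evalPt p A = c A

/-- `p` is the `n`-fundamental polynomial of node `A` in `X`. -/
def IsFundamental (n : ℕ) (X : Finset (ℝ × ℝ)) (A : ℝ × ℝ)
    (p : MvPolynomial (Fin 2) ℝ) : Prop :=
  p.totalDegree ≤ n ∧ evalPt p A = 1 ∧ ∀ B ∈ X, B ≠ A → evalPt p B = 0

/-- Node `A` of `X` uses line `l`. -/
def Uses (n : ℕ) (X : Finset (ℝ × ℝ)) (A : ℝ × ℝ) (l : MvPolynomial (Fin 2) ℝ) : Prop :=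
  ∃ p, IsFundamental n X A p ∧ l ∣ p

/-- The set of nodes of `X` using the line `l` (the set `Xˡ`). -/
noncomputable def UsedSet (n : ℕ) (X : Finset (ℝ × ℝ)) (l : MvPolynomial (Fin 2) ℝ) :
    Finset (ℝ × ℝ) := X.filter (fun A => Uses n X A l)

/-- `l` is a maximal line of `X`: a line passing through exactly `n+1` nodes. -/
def IsMaximalLine (n : ℕ) (X : Finset (ℝ × ℝ)) (l : MvPolynomial (Fin 2) ℝ) : Prop :=
  IsLinearPoly l ∧ (X.filter (fun A => OnLine l A)).card = n + 1

/-- `X` is a `GC_n` set. -/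
def GCSet (n : ℕ) (X : Finset (ℝ × ℝ)) : Prop :=
  NCorrect n X ∧
  ∀ A ∈ X, ∃ f : Fin n → MvPolynomial (Fin 2) ℝ,
    (∀ i, IsLinearPoly (f i)) ∧ IsFundamental n X A (∏ i, f i)

/-- `L` is a set of representatives (one per line) of all maximal lines of `X`. -/
def MaximalLinesRep (n : ℕ) (X : Finset (ℝ × ℝ))
    (L : Finset (MvPolynomial (Fin 2) ℝ)) : Prop :=
  (∀ l ∈ L, IsMaximalLine n X l) ∧
  (∀ l₁ ∈ L, ∀ l₂ ∈ L, SameLine l₁ l₂ → l₁ = l₂) ∧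
  (∀ l, IsMaximalLine n X l → ∃ l' ∈ L, SameLine l l')

/-- A maximal line `lam` is `l`-disjoint: it meets `l` at no node of `X`. -/
def IsDisjointMax (n : ℕ) (X : Finset (ℝ × ℝ)) (l lam : MvPolynomial (Fin 2) ℝ) : Prop :=
  IsMaximalLine n X lam ∧ ∀ A ∈ X, ¬(OnLine lam A ∧ OnLine l A)

/-- A maximal line `lam` is a member of a pair of `l`-adjoint maximal lines. -/
def IsAdjointMax (n : ℕ) (X : Finset (ℝ × ℝ)) (l lam : MvPolynomial (Fin 2) ℝ) : Prop :=
  IsMaximalLine n X lam ∧ ∃ lam', IsMaximalLine n X lam' ∧ ¬SameLine lam lam' ∧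
    ∃ A ∈ X, OnLine lam A ∧ OnLine lam' A ∧ OnLine l A

/-- The `l`-lowering `X̂(l)` of `X`. -/
noncomputable def Lowering (n : ℕ) (X : Finset (ℝ × ℝ)) (l : MvPolynomial (Fin 2) ℝ) :
    Finset (ℝ × ℝ) :=
  X.filter (fun A => ¬ ∃ lam, (IsDisjointMax n X l lam ∨ IsAdjointMax n X l lam) ∧ OnLine lam A)

/-- A node `A` is a `1_m`-node of `X` w.r.t. the maximal-line representatives `L`:
it lies on exactly one maximal line. -/
def Is1mNode (L : Finset (MvPolynomial (Fin 2) ℝ)) (A : ℝ × ℝ) : Prop :=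
  (L.filter (fun l => OnLine l A)).card = 1

/-- `k` lines in general position: no two parallel (any two meet in exactly one point),
no three concurrent. -/
def InGenPos (k : ℕ) (f : Fin k → MvPolynomial (Fin 2) ℝ) : Prop :=
  (∀ i, IsLinearPoly (f i)) ∧
  (∀ i j, i ≠ j → ∃! P : ℝ × ℝ, OnLine (f i) P ∧ OnLine (f j) P) ∧
  (∀ i j m, i ≠ j → j ≠ m → i ≠ m →
    ¬ ∃ P : ℝ × ℝ, OnLine (f i) P ∧ OnLine (f j) P ∧ OnLine (f m) P)

/-- `X` is a Chung-Yao lattice of degree `m`. -/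
def IsChungYao (m : ℕ) (X : Finset (ℝ × ℝ)) : Prop :=
  ∃ f : Fin (m + 2) → MvPolynomial (Fin 2) ℝ, InGenPos (m + 2) f ∧
    ∀ P : ℝ × ℝ, P ∈ X ↔ ∃ i j, i ≠ j ∧ OnLine (f i) P ∧ OnLine (f j) P

/-!
A polynomial of degree at most `d` vanishing at `d + 1` points of a line is divisible by the
line's linear polynomial (restrict it to the line). So if a node `A` lies off `λ'` and `λ''`, its
fundamental polynomial is `λ' u`, and `u`, of degree `n - 1`, vanishes on the `n` nodes of
`λ'' ∖ {O}`, `O` being the node on `λ' ∩ λ'' ∩ ℓ`; thus it is `λ' λ'' q` with `q` a multiple of an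
`(n - 2)`-fundamental polynomial of `A` in `X ∖ (λ' ∪ λ'')`, and conversely every such `q` gives
one for `A` in `X`. Since `ℓ` is prime and divides neither `λ'` nor `λ''` (it has fewer nodes),
`ℓ ∣ λ' λ'' q ↔ ℓ ∣ q`. Finally no node of `λ'` uses `ℓ`: for `O`, removing `ℓ` from its
fundamental polynomial leaves a polynomial of degree `n - 1` vanishing on the other `n` nodes of
`λ'`; any other node `A` of `λ'` has a fundamental polynomial divisible by `λ''` and `ℓ`, whose
quotient, of degree `n - 2`, vanishes on the `n - 1` nodes of `λ' ∖ {A, O}`. Either way `λ'`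
would divide a polynomial equal to `1` at `A`.
-/

open MvPolynomial

@[simp]
theorem evalPt_C (a : ℝ) (A : ℝ × ℝ) : evalPt (C a) A = a :=
  eval_C a

@[simp]
theorem evalPt_mul (p q : MvPolynomial (Fin 2) ℝ) (A : ℝ × ℝ) :
    evalPt (p * q) A = evalPt p A * evalPt q A :=
  map_mul _ p q

theorem SameLine.symm {l₁ l₂ : MvPolynomial (Fin 2) ℝ} (h : SameLine l₁ l₂) : SameLine l₂ l₁ :=
  fun P => (h P).symm

theorem sameLine_of_associated {l₁ l₂ : MvPolynomial (Fin 2) ℝ} (h : Associated l₁ l₂) :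
    SameLine l₁ l₂ := by
  obtain ⟨u, rfl⟩ := h
  intro P
  have hu : evalPt (u : MvPolynomial (Fin 2) ℝ) P ≠ 0 :=
    (u.isUnit.map (eval ![P.1, P.2])).ne_zero
  simp [OnLine, hu]

theorem dvd_aeval_sub_aeval {σ R A : Type*} [CommSemiring R] [CommRing A] [Algebra R A]
    {d : A} {f g : σ → A} (h : ∀ i, d ∣ f i - g i) (p : MvPolynomial σ R) :
    d ∣ aeval f p - aeval g p := by
  rw [← Ideal.mem_span_singleton, ← Ideal.Quotient.eq]
  have hfg : (Ideal.Quotient.mkₐ R (Ideal.span {d})).comp (aeval f) =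
      (Ideal.Quotient.mkₐ R (Ideal.span {d})).comp (aeval g) := by
    refine algHom_ext fun i => ?_
    simpa [Ideal.Quotient.eq, Ideal.mem_span_singleton] using h i
  exact AlgHom.congr_fun hfg p

/-- The parametrisation `t ↦ P₀ + t • (-b, a)` of the line `a x + b y + c = 0`, where
`P₀ = -(c / (a² + b²)) • (a, b)`. -/
noncomputable def lineParam (a b c : ℝ) : Fin 2 → Polynomial ℝ :=
  ![.C (-b) * .X + .C (-c * a / (a ^ 2 + b ^ 2)), .C a * .X + .C (-c * b / (a ^ 2 + b ^ 2))]

/-- Substitutes for `t` the parameter `(a y - b x) / (a² + b²)` of the orthogonal projection of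
`(x, y)` on the line `a x + b y + c = 0`. -/
noncomputable def lineParamInv (a b : ℝ) : Polynomial ℝ →ₐ[ℝ] MvPolynomial (Fin 2) ℝ :=
  Polynomial.aeval (C (-b / (a ^ 2 + b ^ 2)) * X 0 + C (a / (a ^ 2 + b ^ 2)) * X 1)

theorem eval_lineParam {a b c : ℝ} (hs : a ^ 2 + b ^ 2 ≠ 0) {P : ℝ × ℝ}
    (hP : a * P.1 + b * P.2 + c = 0) :
    (fun i => (lineParam a b c i).eval ((a * P.2 - b * P.1) / (a ^ 2 + b ^ 2))) = ![P.1, P.2] := by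
  ext i
  fin_cases i
  · simp only [lineParam, Fin.zero_eta, Matrix.cons_val_zero, Polynomial.eval_add,
      Polynomial.eval_mul, Polynomial.eval_C, Polynomial.eval_X]
    field_simp
    linear_combination (-a) * hP
  · simp only [lineParam, Fin.mk_one, Matrix.cons_val_one, Matrix.cons_val_fin_one,
      Polynomial.eval_add, Polynomial.eval_mul, Polynomial.eval_C, Polynomial.eval_X]
    field_simp
    linear_combination (-b) * hP

theorem linearForm_dvd_X_sub_lineParamInv {a b : ℝ} (c : ℝ) (hs : a ^ 2 + b ^ 2 ≠ 0)
    (i : Fin 2) : C a * X 0 + C b * X 1 + C c ∣ X i - lineParamInv a b (lineParam a b c i) := by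
  set s := a ^ 2 + b ^ 2
  have hC : C s⁻¹ * C s = (1 : MvPolynomial (Fin 2) ℝ) := by
    rw [← map_mul, inv_mul_cancel₀ hs, map_one]
  have hCs : (C s : MvPolynomial (Fin 2) ℝ) = C a ^ 2 + C b ^ 2 := by simp [s]
  fin_cases i
  · refine ⟨C (a / s), ?_⟩
    simp only [lineParamInv, lineParam, div_eq_mul_inv, Fin.zero_eta, Matrix.cons_val_zero,
      map_add, map_mul, Polynomial.aeval_C, Polynomial.aeval_X, algebraMap_eq, map_neg]
    linear_combination (-X 0) * hC + X 0 * C s⁻¹ * hCs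
  · refine ⟨C (b / s), ?_⟩
    simp only [lineParamInv, lineParam, div_eq_mul_inv, Fin.mk_one, Matrix.cons_val_one,
      Matrix.cons_val_zero, map_add, map_mul, Polynomial.aeval_C, Polynomial.aeval_X,
      algebraMap_eq, map_neg]
    linear_combination (-X 1) * hC + X 1 * C s⁻¹ * hCs

theorem aeval_lineParam_eq_zero {a b c : ℝ} (hs : a ^ 2 + b ^ 2 ≠ 0)
    {p : MvPolynomial (Fin 2) ℝ} {S : Finset (ℝ × ℝ)} (hS : p.totalDegree < S.card)
    (hSl : ∀ P ∈ S, a * P.1 + b * P.2 + c = 0) (hpS : ∀ P ∈ S, evalPt p P = 0) :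
    aeval (lineParam a b c) p = 0 := by
  let τ : ℝ × ℝ → ℝ := fun P => (a * P.2 - b * P.1) / (a ^ 2 + b ^ 2)
  have heval : ∀ t : ℝ,
      (aeval (lineParam a b c) p).eval t = eval (fun i => (lineParam a b c i).eval t) p := by
    intro t
    rw [← Polynomial.coe_aeval_eq_eval, ← AlgHom.comp_apply, comp_aeval]
    rfl
  have hτ : Set.InjOn τ S := by
    intro P hP Q hQ hPQ
    have hP' : (fun i => (lineParam a b c i).eval (τ P)) = ![P.1, P.2] :=
      eval_lineParam hs (hSl P hP)
    have hQ' : (fun i => (lineParam a b c i).eval (τ Q)) = ![Q.1, Q.2] :=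
      eval_lineParam hs (hSl Q hQ)
    rw [hPQ, hQ'] at hP'
    simpa [Prod.ext_iff, and_comm, eq_comm] using hP'
  apply Polynomial.eq_zero_of_natDegree_lt_card_of_eval_eq_zero' _ (S.image τ)
  · simp only [Finset.mem_image, forall_exists_index, and_imp, forall_apply_eq_imp_iff₂]
    intro P hP
    rw [heval, eval_lineParam hs (hSl P hP)]
    exact hpS P hP
  · rw [Finset.card_image_of_injOn hτ]
    calc (aeval (lineParam a b c) p).natDegree ≤ p.totalDegree * 1 :=
          aeval_natDegree_le p le_rfl _ fun i => by
            fin_cases i <;> exact Polynomial.natDegree_linear_le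
      _ < S.card := by simpa using hS

theorem linearForm_dvd_of_eval_eq_zero {a b c : ℝ} (hab : a ≠ 0 ∨ b ≠ 0)
    {p : MvPolynomial (Fin 2) ℝ} {S : Finset (ℝ × ℝ)} (hS : p.totalDegree < S.card)
    (hSl : ∀ P ∈ S, a * P.1 + b * P.2 + c = 0) (hpS : ∀ P ∈ S, evalPt p P = 0) :
    C a * X 0 + C b * X 1 + C c ∣ p := by
  have hs : a ^ 2 + b ^ 2 ≠ 0 := by rcases hab with h | h <;> positivity
  simpa [aeval_X_left_apply, ← comp_aeval, aeval_lineParam_eq_zero hs hS hSl hpS] using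
    dvd_aeval_sub_aeval (linearForm_dvd_X_sub_lineParamInv c hs) p

namespace IsLinearPoly

variable {l l₁ l₂ p f t : MvPolynomial (Fin 2) ℝ} {S : Finset (ℝ × ℝ)}

theorem exists_eq_C_mul_X_add_C_mul_X_add_C (hl : IsLinearPoly l) :
    ∃ a b c : ℝ, (a ≠ 0 ∨ b ≠ 0) ∧ l = C a * X 0 + C b * X 1 + C c := by
  have hform : l = C (coeff (.single 0 1) l) * X 0 + C (coeff (.single 1 1) l) * X 1
      + C (coeff 0 l) := by
    ext m
    obtain rfl | rfl | rfl | hm :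
        m = .single 0 1 ∨ m = .single 1 1 ∨ m = 0 ∨ 1 < m.degree := by
      simp only [Finsupp.ext_iff, Fin.forall_fin_two, Finsupp.degree_eq_sum, Fin.sum_univ_two,
        Finsupp.single_eq_same, ne_eq, one_ne_zero, not_false_eq_true, Finsupp.single_eq_of_ne,
        zero_ne_one, Finsupp.coe_zero, Pi.zero_apply]
      omega
    · simp [coeff_X, Finsupp.single_eq_single_iff, eq_comm (a := (0 : Fin 2 →₀ ℕ))]
    · simp [coeff_X, Finsupp.single_eq_single_iff, eq_comm (a := (0 : Fin 2 →₀ ℕ))]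
    · simp [coeff_X]
    · have hm' : ∀ i : Fin 2, .single i 1 ≠ m := by
        rintro i rfl
        simp at hm
      have hm0 : 0 ≠ m := by
        rintro rfl
        simp at hm
      rw [coeff_eq_zero_of_totalDegree_lt (by rw [hl, ← Finsupp.degree_apply]; exact hm)]
      simp [coeff_X, hm', hm0]
  refine ⟨_, _, _, ?_, hform⟩
  by_contra! h
  rw [hform, h.1, h.2] at hl
  simp [IsLinearPoly] at hl

theorem ne_zero (hl : IsLinearPoly l) : l ≠ 0 := by
  rintro rfl
  simp [IsLinearPoly] at hl

theorem totalDegree_mul (hl : IsLinearPoly l) (hp : p ≠ 0) :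
    (l * p).totalDegree = p.totalDegree + 1 := by
  rw [totalDegree_mul_of_isDomain hl.ne_zero hp, hl, add_comm]

theorem irreducible (hl : IsLinearPoly l) : Irreducible l := by
  refine irreducible_of_totalDegree_eq_one hl fun x hx => isUnit_iff_ne_zero.mpr ?_
  rintro rfl
  exact hl.ne_zero (MvPolynomial.ext _ _ fun m => by simpa using hx m)

theorem prime (hl : IsLinearPoly l) : Prime l :=
  hl.irreducible.prime

theorem sameLine_of_dvd (h₁ : IsLinearPoly l₁) (h₂ : IsLinearPoly l₂) (h : l₁ ∣ l₂) :
    SameLine l₁ l₂ :=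
  sameLine_of_associated (h₁.irreducible.associated_of_dvd h₂.irreducible h)

theorem dvd_of_eval_eq_zero (hl : IsLinearPoly l) (hS : p.totalDegree < S.card)
    (hSl : ∀ P ∈ S, OnLine l P) (hpS : ∀ P ∈ S, evalPt p P = 0) : l ∣ p := by
  obtain ⟨a, b, c, hab, rfl⟩ := hl.exists_eq_C_mul_X_add_C_mul_X_add_C
  refine linearForm_dvd_of_eval_eq_zero hab hS (fun P hP => ?_) hpS
  simpa [OnLine, evalPt] using hSl P hP

theorem dvd_of_eval_mul_eq_zero (hl : IsLinearPoly l) (hS : t.totalDegree < S.card)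
    (hSl : ∀ P ∈ S, OnLine l P) (hf : ∀ P ∈ S, ¬ OnLine f P)
    (hft : ∀ P ∈ S, evalPt (f * t) P = 0) : l ∣ t :=
  hl.dvd_of_eval_eq_zero hS hSl fun P hP =>
    (mul_eq_zero.mp (by simpa using hft P hP)).resolve_left (hf P hP)

theorem not_onLine_of_ne (h₁ : IsLinearPoly l₁) (h₂ : IsLinearPoly l₂) (hne : ¬ SameLine l₁ l₂)
    {P Q : ℝ × ℝ} (hP₁ : OnLine l₁ P) (hP₂ : OnLine l₂ P) (hQ₁ : OnLine l₁ Q) (hQP : Q ≠ P) :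
    ¬ OnLine l₂ Q := by
  intro hQ₂
  refine hne (h₁.sameLine_of_dvd h₂ (h₁.dvd_of_eval_eq_zero (S := {P, Q}) ?_ ?_ ?_))
  · rw [Finset.card_pair hQP.symm, h₂]
    exact one_lt_two
  · simpa using ⟨hP₁, hQ₁⟩
  · simpa using ⟨hP₂, hQ₂⟩

end IsLinearPoly

section Configuration

variable {n m : ℕ} {X Y : Finset (ℝ × ℝ)} {A O : ℝ × ℝ}
  {l lam₁ lam₂ p q f : MvPolynomial (Fin 2) ℝ}

theorem not_sameLine_of_card_le (hk : (X.filter (fun A => OnLine l A)).card ≤ n)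
    (hlam : IsMaximalLine n X lam₁) : ¬ SameLine l lam₁ := by
  intro h
  rw [Finset.filter_congr (fun A _ => h A), hlam.2] at hk
  omega

theorem not_dvd_of_card_le (hl : IsLinearPoly l)
    (hk : (X.filter (fun A => OnLine l A)).card ≤ n) (hlam : IsMaximalLine n X lam₁) :
    ¬ l ∣ lam₁ :=
  fun h => not_sameLine_of_card_le hk hlam (hl.sameLine_of_dvd hlam.1 h)

namespace IsFundamental

theorem ne_zero (hp : IsFundamental n X A p) : p ≠ 0 := by
  rintro rfl
  simpa [evalPt] using hp.2.1

theorem not_dvd_of_onLine (hp : IsFundamental n X A p) (hA : OnLine l A) : ¬ l ∣ p := by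
  rintro ⟨q, rfl⟩
  simpa [show evalPt l A = 0 from hA] using hp.2.1

theorem dvd_of_isMaximalLine (hp : IsFundamental n X A p) (hlam : IsMaximalLine n X lam₁)
    (hA : ¬ OnLine lam₁ A) : lam₁ ∣ p := by
  refine hlam.1.dvd_of_eval_eq_zero (S := X.filter (fun B => OnLine lam₁ B))
    (by rw [hlam.2]; exact Nat.lt_succ_of_le hp.1) (fun B hB => (Finset.mem_filter.mp hB).2)
    fun B hB => hp.2.2 B (Finset.mem_filter.mp hB).1 ?_
  rintro rfl
  exact hA (Finset.mem_filter.mp hB).2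

theorem exists_eq_mul_mul (hp : IsFundamental n X A p) (h₁ : IsMaximalLine n X lam₁)
    (h₂ : IsMaximalLine n X lam₂) (hne : ¬ SameLine lam₁ lam₂) (hO : O ∈ X)
    (hO₁ : OnLine lam₁ O) (hO₂ : OnLine lam₂ O) (hA₁ : ¬ OnLine lam₁ A)
    (hA₂ : ¬ OnLine lam₂ A) : ∃ q, p = lam₁ * lam₂ * q ∧ q.totalDegree ≤ n - 2 := by
  obtain ⟨u, rfl⟩ := hp.dvd_of_isMaximalLine h₁ hA₁
  have hu : u ≠ 0 := right_ne_zero_of_mul hp.ne_zero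
  have hdeg_u := h₁.1.totalDegree_mul hu
  obtain ⟨q, rfl⟩ : lam₂ ∣ u := by
    refine h₂.1.dvd_of_eval_mul_eq_zero (f := lam₁)
      (S := (X.filter (fun B => OnLine lam₂ B)).erase O) ?_ ?_ ?_ fun B hB => ?_
    · rw [Finset.card_erase_of_mem (Finset.mem_filter.mpr ⟨hO, hO₂⟩), h₂.2]
      have := hp.1
      omega
    · exact fun B hB => (Finset.mem_filter.mp (Finset.mem_of_mem_erase hB)).2
    · exact fun B hB => h₂.1.not_onLine_of_ne h₁.1 (fun h => hne h.symm) hO₂ hO₁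
        (Finset.mem_filter.mp (Finset.mem_of_mem_erase hB)).2 (Finset.ne_of_mem_erase hB)
    · obtain ⟨hBX, hB₂⟩ := Finset.mem_filter.mp (Finset.mem_of_mem_erase hB)
      exact hp.2.2 B hBX fun h => hA₂ (h ▸ hB₂)
  have hdeg_q := h₂.1.totalDegree_mul (right_ne_zero_of_mul hu)
  have := hp.1
  exact ⟨q, (mul_assoc _ _ _).symm, by omega⟩

theorem C_mul_of_mul (hp : IsFundamental n X A (f * q)) (hq : q.totalDegree ≤ m)
    (hYX : Y ⊆ X) (hf : ∀ B ∈ Y, evalPt f B ≠ 0) :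
    IsFundamental m Y A (C (evalPt f A) * q) := by
  refine ⟨(totalDegree_mul _ _).trans (by simpa using hq), by simpa using hp.2.1,
    fun B hB hBA => ?_⟩
  have hfqB := hp.2.2 B (hYX hB) hBA
  rw [evalPt_mul] at hfqB
  rw [evalPt_mul, (mul_eq_zero.mp hfqB).resolve_left (hf B hB), mul_zero]

theorem C_inv_mul_mul (hq : IsFundamental m Y A q) (hdeg : f.totalDegree + m ≤ n)
    (hfA : evalPt f A ≠ 0) (hf : ∀ B ∈ X, B ∉ Y → evalPt f B = 0) :
    IsFundamental n X A (C (evalPt f A)⁻¹ * (f * q)) := by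
  refine ⟨?_, by simp [hfA, hq.2.1], fun B hB hBA => ?_⟩
  · calc (C (evalPt f A)⁻¹ * (f * q)).totalDegree
        ≤ (C (evalPt f A)⁻¹ : MvPolynomial (Fin 2) ℝ).totalDegree + (f * q).totalDegree :=
          totalDegree_mul _ _
      _ ≤ 0 + (f.totalDegree + q.totalDegree) := by
          rw [totalDegree_C]
          exact Nat.add_le_add_left (totalDegree_mul f q) 0
      _ ≤ n := by
          have := hq.1
          omega
  · by_cases hBY : B ∈ Y
    · simp [hq.2.2 B hBY hBA]
    · simp [hf B hB hBY]

theorem not_dvd_of_onLine_of_isMaximalLine (hp : IsFundamental n X A p) (hl : IsLinearPoly l)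
    (hlam : IsMaximalLine n X lam₁) (hne : ¬ SameLine l lam₁) (hA : A ∈ X)
    (hAl : OnLine l A) (hA₁ : OnLine lam₁ A) : ¬ l ∣ p := by
  rintro ⟨t, rfl⟩
  have hdeg := hl.totalDegree_mul (right_ne_zero_of_mul hp.ne_zero)
  refine hp.not_dvd_of_onLine hA₁ (Dvd.dvd.mul_left ?_ l)
  refine hlam.1.dvd_of_eval_mul_eq_zero (f := l)
    (S := (X.filter (fun B => OnLine lam₁ B)).erase A) ?_ ?_ ?_ fun B hB => ?_
  · rw [Finset.card_erase_of_mem (Finset.mem_filter.mpr ⟨hA, hA₁⟩), hlam.2]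
    have := hp.1
    omega
  · exact fun B hB => (Finset.mem_filter.mp (Finset.mem_of_mem_erase hB)).2
  · exact fun B hB => hlam.1.not_onLine_of_ne hl (fun h => hne h.symm) hA₁ hAl
      (Finset.mem_filter.mp (Finset.mem_of_mem_erase hB)).2 (Finset.ne_of_mem_erase hB)
  · exact hp.2.2 B (Finset.mem_filter.mp (Finset.mem_of_mem_erase hB)).1
      (Finset.ne_of_mem_erase hB)

theorem not_dvd_of_onLine_of_ne (hp : IsFundamental n X A p) (hl : IsLinearPoly l)
    (h₁ : IsMaximalLine n X lam₁) (h₂ : IsMaximalLine n X lam₂) (hne : ¬ SameLine lam₁ lam₂)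
    (hl₁ : ¬ SameLine l lam₁) (hl₂ : ¬ l ∣ lam₂) (hO : O ∈ X) (hO₁ : OnLine lam₁ O)
    (hO₂ : OnLine lam₂ O) (hOl : OnLine l O) (hA : A ∈ X) (hA₁ : OnLine lam₁ A)
    (hAO : A ≠ O) : ¬ l ∣ p := by
  intro hlp
  obtain ⟨u, rfl⟩ :=
    hp.dvd_of_isMaximalLine h₂ (h₁.1.not_onLine_of_ne h₂.1 hne hO₁ hO₂ hA₁ hAO)
  obtain ⟨s, rfl⟩ := (hl.prime.dvd_or_dvd hlp).resolve_left hl₂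
  have hs : s ≠ 0 := right_ne_zero_of_mul (right_ne_zero_of_mul hp.ne_zero)
  have hdeg : (lam₂ * (l * s)).totalDegree = s.totalDegree + 2 := by
    rw [h₂.1.totalDegree_mul (mul_ne_zero hl.ne_zero hs), hl.totalDegree_mul hs]
  refine hp.not_dvd_of_onLine hA₁ ?_
  rw [← mul_assoc]
  refine Dvd.dvd.mul_left (h₁.1.dvd_of_eval_mul_eq_zero (f := lam₂ * l)
    (S := ((X.filter (fun B => OnLine lam₁ B)).erase A).erase O) ?_ ?_ ?_ fun B hB => ?_) _
  · rw [Finset.card_erase_of_mem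
      (Finset.mem_erase.mpr ⟨hAO.symm, Finset.mem_filter.mpr ⟨hO, hO₁⟩⟩),
      Finset.card_erase_of_mem (Finset.mem_filter.mpr ⟨hA, hA₁⟩), h₁.2]
    have := hp.1
    omega
  · exact fun B hB =>
      (Finset.mem_filter.mp (Finset.mem_of_mem_erase (Finset.mem_of_mem_erase hB))).2
  · intro B hB
    have hB₁ := (Finset.mem_filter.mp (Finset.mem_of_mem_erase (Finset.mem_of_mem_erase hB))).2
    have hBO := Finset.ne_of_mem_erase hB
    have hB₂ := h₁.1.not_onLine_of_ne h₂.1 hne hO₁ hO₂ hB₁ hBO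
    have hBl := h₁.1.not_onLine_of_ne hl (fun h => hl₁ h.symm) hO₁ hOl hB₁ hBO
    simpa [OnLine] using ⟨hB₂, hBl⟩
  · obtain ⟨hBA, hB⟩ := Finset.mem_erase.mp (Finset.mem_of_mem_erase hB)
    simpa [mul_assoc] using hp.2.2 B (Finset.mem_filter.mp hB).1 hBA

end IsFundamental

theorem not_onLine_of_uses (hl : IsLinearPoly l)
    (hk : (X.filter (fun A => OnLine l A)).card ≤ n) (h₁ : IsMaximalLine n X lam₁)
    (h₂ : IsMaximalLine n X lam₂) (hne : ¬ SameLine lam₁ lam₂) (hO : O ∈ X)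
    (hO₁ : OnLine lam₁ O) (hO₂ : OnLine lam₂ O) (hOl : OnLine l O) (hA : A ∈ X)
    (hAl : Uses n X A l) : ¬ OnLine lam₁ A := by
  intro hA₁
  obtain ⟨p, hp, hlp⟩ := hAl
  obtain rfl | hAO := eq_or_ne A O
  · exact hp.not_dvd_of_onLine_of_isMaximalLine hl h₁ (not_sameLine_of_card_le hk h₁) hA hOl
      hA₁ hlp
  · exact hp.not_dvd_of_onLine_of_ne hl h₁ h₂ hne (not_sameLine_of_card_le hk h₁)
      (not_dvd_of_card_le hl hk h₂) hO hO₁ hO₂ hOl hA hA₁ hAO hlp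

theorem uses_filter_of_uses (hl : IsLinearPoly l) (hl₁ : ¬ l ∣ lam₁) (hl₂ : ¬ l ∣ lam₂)
    (h₁ : IsMaximalLine n X lam₁) (h₂ : IsMaximalLine n X lam₂) (hne : ¬ SameLine lam₁ lam₂)
    (hO : O ∈ X) (hO₁ : OnLine lam₁ O) (hO₂ : OnLine lam₂ O) (hA₁ : ¬ OnLine lam₁ A)
    (hA₂ : ¬ OnLine lam₂ A) (hAl : Uses n X A l) :
    Uses (n - 2) (X.filter (fun B => ¬ OnLine lam₁ B ∧ ¬ OnLine lam₂ B)) A l := by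
  obtain ⟨p, hp, hlp⟩ := hAl
  obtain ⟨q, rfl, hq⟩ := hp.exists_eq_mul_mul h₁ h₂ hne hO hO₁ hO₂ hA₁ hA₂
  refine ⟨_, hp.C_mul_of_mul hq (Finset.filter_subset _ _) fun B hB => ?_, ?_⟩
  · simpa [OnLine] using (Finset.mem_filter.mp hB).2
  · have hl₁₂ : ¬ l ∣ lam₁ * lam₂ := fun h => (hl.prime.dvd_or_dvd h).elim hl₁ hl₂
    exact ((hl.prime.dvd_or_dvd hlp).resolve_left hl₁₂).mul_left _

theorem uses_of_uses_filter (hn : 2 ≤ n) (h₁ : IsLinearPoly lam₁) (h₂ : IsLinearPoly lam₂)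
    (hA₁ : ¬ OnLine lam₁ A) (hA₂ : ¬ OnLine lam₂ A)
    (hAl : Uses (n - 2) (X.filter (fun B => ¬ OnLine lam₁ B ∧ ¬ OnLine lam₂ B)) A l) :
    Uses n X A l := by
  obtain ⟨q, hq, hlq⟩ := hAl
  refine ⟨_, hq.C_inv_mul_mul (f := lam₁ * lam₂) ?_ ?_ fun B hB hBY => ?_,
    (hlq.mul_left _).mul_left _⟩
  · have := totalDegree_mul lam₁ lam₂
    rw [h₁, h₂] at this
    omega
  · simpa [OnLine] using ⟨hA₁, hA₂⟩
  · simp only [Finset.mem_filter, hB, true_and, not_and_or, not_not] at hBY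
    simpa [OnLine] using hBY

end Configuration

theorem adjoint_reduction_general
    (n : ℕ) (hn : 2 ≤ n) (X : Finset (ℝ × ℝ))
    (l : MvPolynomial (Fin 2) ℝ) (hl : IsLinearPoly l)
    (hk : (X.filter (fun A => OnLine l A)).card ≤ n)
    (lam' lam'' : MvPolynomial (Fin 2) ℝ)
    (hlam' : IsMaximalLine n X lam') (hlam'' : IsMaximalLine n X lam'')
    (hne : ¬ SameLine lam' lam'')
    (hadj : ∃ A ∈ X, OnLine lam' A ∧ OnLine lam'' A ∧ OnLine l A) :
    UsedSet n X l =
      UsedSet (n - 2) (X.filter (fun A => ¬ OnLine lam' A ∧ ¬ OnLine lam'' A)) l := by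
  obtain ⟨O, hO, hO', hO'', hOl⟩ := hadj
  ext A
  simp only [UsedSet, Finset.mem_filter]
  constructor
  · rintro ⟨hAX, hA⟩
    have hA' := not_onLine_of_uses hl hk hlam' hlam'' hne hO hO' hO'' hOl hAX hA
    have hA'' := not_onLine_of_uses hl hk hlam'' hlam' (fun h => hne h.symm) hO hO'' hO' hOl
      hAX hA
    exact ⟨⟨hAX, hA', hA''⟩, uses_filter_of_uses hl (not_dvd_of_card_le hl hk hlam')
      (not_dvd_of_card_le hl hk hlam'') hlam' hlam'' hne hO hO' hO'' hA' hA'' hA⟩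
  · rintro ⟨⟨hAX, hA', hA''⟩, hA⟩
    exact ⟨hAX, uses_of_uses_filter hn hlam'.1 hlam''.1 hA' hA'' hA⟩

/-- `l`-adjoint reduction: if two (distinct) maximal lines `lam'`, `lam''`
meet `l` at a common node of `X`, then `Xˡ = (X \ (lam' ∪ lam''))ˡ`. -/
theorem adjoint_reduction
    (n : ℕ) (hn : 2 ≤ n) (X : Finset (ℝ × ℝ)) (hX : NCorrect n X)
    (l : MvPolynomial (Fin 2) ℝ) (hl : IsLinearPoly l)
    (hk : (X.filter (fun A => OnLine l A)).card ≤ n)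
    (lam' lam'' : MvPolynomial (Fin 2) ℝ)
    (hlam' : IsMaximalLine n X lam') (hlam'' : IsMaximalLine n X lam'')
    (hne : ¬ SameLine lam' lam'')
    (hadj : ∃ A ∈ X, OnLine lam' A ∧ OnLine lam'' A ∧ OnLine l A) :
    UsedSet n X l =
      UsedSet (n - 2) (X.filter (fun A => ¬ OnLine lam' A ∧ ¬ OnLine lam'' A)) l :=
  adjoint_reduction_general n hn X l hl hk lam' lam'' hlam' hlam'' hne hadj
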